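/- arXiv:2212.13373 — 3 statements merged into one kernel-verified Lean document; each statement's English description precedes it below -/
import Mathlib

section
/- For any permutation w in S_n, the recording tableau of w equals the insertion tableau of w^{-1}: Q_RS(w) = P_RS(w^{-1}). -/
namespace GelfandRSK

/-- Schensted insertion of `x` into a single row: replace the first entry greater than `x`,
returning the new row and the bumped entry (if any). -/
def insertRow (r : List ℕ) (x : ℕ) : List ℕ × Option ℕ :=
  match r.findIdx? (fun y => decide (x < y)) with
  | none => (r ++ [x], none)
  | some i => (r.set i x, r[i]?)

/-- Schensted row insertion of `x` into a tableau (list of rows). -/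
def rsInsert : List (List ℕ) → ℕ → List (List ℕ)
  | [], x => [[x]]
  | r :: rest, x =>
    match insertRow r x with
    | (r', none) => r' :: rest
    | (r', some y) => r' :: rsInsert rest y

/-- The (0-indexed) row in which Schensted insertion of `x` adds a new box. -/
def rsBumpRow : List (List ℕ) → ℕ → ℕ
  | [], _ => 0
  | r :: rest, x =>
    match insertRow r x with
    | (_, none) => 0
    | (_, some y) => rsBumpRow rest y + 1

/-- The (0-indexed) column in which Schensted insertion of `x` adds a new box. -/
def rsBumpCol (T : List (List ℕ)) (x : ℕ) : ℕ := (T.getD (rsBumpRow T x) []).length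

/-- Add entry `k` at the end of (0-indexed) row `r`. -/
def addAtRow (T : List (List ℕ)) (r : ℕ) (k : ℕ) : List (List ℕ) :=
  if r < T.length then T.set r (T.getD r [] ++ [k]) else T ++ [[k]]

/-- Add entry `k` at the end of (0-indexed) column `c`. -/
def addAtCol (T : List (List ℕ)) (c : ℕ) (k : ℕ) : List (List ℕ) :=
  addAtRow T (T.findIdx (fun r => decide (r.length ≤ c))) k

/-- The Robinson--Schensted insertion tableau of a word. -/
def PRS (w : List ℕ) : List (List ℕ) := w.foldl rsInsert []

/-- The Robinson--Schensted pair (insertion tableau, recording tableau) of a word. -/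
def RSpair (w : List ℕ) : List (List ℕ) × List (List ℕ) :=
  (w.zipIdx.map Prod.swap).foldl (fun pq ix =>
    (rsInsert pq.1 ix.2, addAtRow pq.2 (rsBumpRow pq.1 ix.2) (ix.1 + 1))) ([], [])

/-- The Robinson--Schensted recording tableau of a word. -/
def QRS (w : List ℕ) : List (List ℕ) := (RSpair w).2

/-- The row reading word: read rows left to right, starting with the last row. -/
def rowWord (T : List (List ℕ)) : List ℕ := T.reverse.flatten

/-- The shape of a tableau: the list of its row lengths. -/
def shape (T : List (List ℕ)) : List ℕ := T.map List.length

/-- Columns of the tableau are strictly increasing downwards. -/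
def colStrict (T : List (List ℕ)) : Prop :=
  ∀ i c, i + 1 < T.length → c < (T.getD (i+1) []).length →
    (T.getD i []).getD c 0 < (T.getD (i+1) []).getD c 0

/-- A partially standard tableau: semistandard, of partition shape, with
distinct positive entries (hence rows and columns strictly increasing). -/
def PartiallyStandard (T : List (List ℕ)) : Prop :=
  (∀ r ∈ T, r ≠ []) ∧
  T.Chain' (fun r₁ r₂ => r₂.length ≤ r₁.length) ∧
  (∀ r ∈ T, r.Chain' (· < ·)) ∧
  colStrict T ∧
  T.flatten.Nodup ∧
  (∀ x ∈ T.flatten, 0 < x)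

/-- A standard tableau with `n` boxes: partially standard with entries exactly `1, …, n`. -/
def IsStandardTab (n : ℕ) (T : List (List ℕ)) : Prop :=
  PartiallyStandard T ∧ T.flatten.Perm (List.range' 1 n)

/-- Row Beissinger insertion of a pair `(a, b)` with `a ≤ b`. -/
def rBS (T : List (List ℕ)) (a b : ℕ) : List (List ℕ) :=
  if a = b then addAtRow T 0 a
  else addAtRow (rsInsert T a) (rsBumpRow T a + 1) b

/-- Column Beissinger insertion of a pair `(a, b)` with `a ≤ b`. -/
def cBS (T : List (List ℕ)) (a b : ℕ) : List (List ℕ) :=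
  if a = b then addAtCol T 0 a
  else addAtCol (rsInsert T a) (rsBumpCol T a + 1) b

/-- The function on 0-based indices underlying a permutation of `Fin n`
(identity outside `[0, n)`). -/
def permFn {n : ℕ} (z : Equiv.Perm (Fin n)) : ℕ → ℕ :=
  fun i => if h : i < n then (z ⟨i, h⟩ : ℕ) else i

/-- The one-line word (with 1-based values) of a function on `[0, m)`. -/
def wordFn (w : ℕ → ℕ) (m : ℕ) : List ℕ := (List.range m).map (fun i => w i + 1)

/-- The one-line word (with 1-based values) of a permutation in `S_n`. -/
def wordOf {n : ℕ} (z : Equiv.Perm (Fin n)) : List ℕ := wordFn (permFn z) n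

/-- The 1-based action of a permutation: `act y j = y(j)` in 1-based notation. -/
def act {n : ℕ} (y : Equiv.Perm (Fin n)) (j : ℕ) : ℕ := permFn y (j - 1) + 1

/-- The 1-based pairs `(a, b)` with `a ≤ b = z(a)` of an involution,
listed in increasing order of `b`. -/
def invPairsFn (w : ℕ → ℕ) (m : ℕ) : List (ℕ × ℕ) :=
  ((List.range m).filter (fun b => decide (w b ≤ b))).map (fun b => (w b + 1, b + 1))

/-- Row Beissinger correspondence applied to an involution given as a function on `[0, m)`. -/
def PrBSfn (w : ℕ → ℕ) (m : ℕ) : List (List ℕ) :=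
  (invPairsFn w m).foldl (fun T p => rBS T p.1 p.2) []

/-- Column Beissinger correspondence applied to an involution given as a function on `[0, m)`. -/
def PcBSfn (w : ℕ → ℕ) (m : ℕ) : List (List ℕ) :=
  (invPairsFn w m).foldl (fun T p => cBS T p.1 p.2) []

/-- The row Beissinger tableau of an involution in `S_n`. -/
def PrBS {n : ℕ} (z : Equiv.Perm (Fin n)) : List (List ℕ) := PrBSfn (permFn z) n

/-- The column Beissinger tableau of an involution in `S_n`. -/
def PcBS {n : ℕ} (z : Equiv.Perm (Fin n)) : List (List ℕ) := PcBSfn (permFn z) n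

/-- The transpose of a tableau. -/
def transposeT (T : List (List ℕ)) : List (List ℕ) :=
  (List.range (T.headD []).length).map (fun c => T.filterMap (fun r => r[c]?))

/-- The length of (0-indexed) column `c`. -/
def colLen (T : List (List ℕ)) (c : ℕ) : ℕ := (T.filter (fun r => decide (c < r.length))).length

/-- The number of columns of odd length. -/
def oddColCount (T : List (List ℕ)) : ℕ :=
  ((List.range (T.headD []).length).filter (fun c => decide (colLen T c % 2 = 1))).length

/-- The number of rows of odd length. -/
def oddRowCount (T : List (List ℕ)) : ℕ :=
  (T.filter (fun r => decide (r.length % 2 = 1))).length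

/-- Apply a function to every entry of a tableau. -/
def applyEntries (f : ℕ → ℕ) (T : List (List ℕ)) : List (List ℕ) := T.map (List.map f)

/-- The transposition of values `j` and `j+1`. -/
def swapVals (j : ℕ) : ℕ → ℕ := fun x => if x = j then j + 1 else if x = j + 1 then j else x

/-- The elementary dual equivalence operator `D_i` acting on a tableau
containing the entries `i-1`, `i`, `i+1`, defined via the row reading word. -/
def Dop (i : ℕ) (T : List (List ℕ)) : List (List ℕ) :=
  let w := rowWord T
  let p : ℕ → ℕ := fun v => w.idxOf v
  if (p i < p (i+1) ∧ p (i+1) < p (i-1)) ∨ (p (i-1) < p (i+1) ∧ p (i+1) < p i) then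
    applyEntries (swapVals (i-1)) T
  else if (p i < p (i-1) ∧ p (i-1) < p (i+1)) ∨ (p (i+1) < p (i-1) ∧ p (i-1) < p i) then
    applyEntries (swapVals i) T
  else T

/-- `x` lies strictly between `u` and `v`. -/
def Btwn {α : Type*} [LT α] (x u v : α) : Prop := (u < x ∧ x < v) ∨ (v < x ∧ x < u)

/-- Exchange the entries at 0-based positions `p` and `q` of a word. -/
def swapPos (u : List ℕ) (p q : ℕ) : List ℕ := (u.set p (u.getD q 0)).set q (u.getD p 0)

/-- The Knuth move relation at 1-based position `i` on words: either the word is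
unchanged and the letters at positions `i-1, i, i+1` are monotone, or the letters at
positions `i-1, i` are exchanged (when the letter at position `i+1` is between them),
or the letters at positions `i, i+1` are exchanged (when the letter at position `i-1`
is between them). -/
def KnuthRelW (i : ℕ) (u v : List ℕ) : Prop :=
  (v = u ∧ ((u.getD (i-2) 0 < u.getD (i-1) 0 ∧ u.getD (i-1) 0 < u.getD i 0) ∨
            (u.getD i 0 < u.getD (i-1) 0 ∧ u.getD (i-1) 0 < u.getD (i-2) 0))) ∨
  (Btwn (u.getD i 0) (u.getD (i-2) 0) (u.getD (i-1) 0) ∧ v = swapPos u (i-2) (i-1)) ∨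
  (Btwn (u.getD (i-2) 0) (u.getD (i-1) 0) (u.getD i 0) ∧ v = swapPos u (i-1) i)

/-- The Knuth move relation at position `i` on permutations. -/
def KnuthRel {n : ℕ} (i : ℕ) (v w : Equiv.Perm (Fin n)) : Prop :=
  KnuthRelW i (wordOf v) (wordOf w)

/-- The dual Knuth move relation at position `i` on permutations. -/
def DualKnuthRel {n : ℕ} (i : ℕ) (v w : Equiv.Perm (Fin n)) : Prop :=
  KnuthRelW i (wordOf v⁻¹) (wordOf w⁻¹)

/-- Knuth equivalence of permutations. -/
def KnuthEquiv {n : ℕ} (v w : Equiv.Perm (Fin n)) : Prop :=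
  Relation.ReflTransGen (fun a b => ∃ i, 1 < i ∧ i < n ∧ KnuthRel i a b) v w

/-- Dual Knuth equivalence of permutations. -/
def DualKnuthEquiv {n : ℕ} (v w : Equiv.Perm (Fin n)) : Prop :=
  Relation.ReflTransGen (fun a b => ∃ i, 1 < i ∧ i < n ∧ DualKnuthRel i a b) v w

/-- The 0-based fixed points of a permutation, in increasing order. -/
def fixList {n : ℕ} (z : Equiv.Perm (Fin n)) : List ℕ :=
  ((List.finRange n).filter (fun c => decide (z c = c))).map Fin.val

/-- The ascending embedding `ι_asc` of involutions of `[n]` into fixed-point-free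
involutions of `[2n]`, as a function on 0-based indices. -/
def iotaAsc {n : ℕ} (z : Equiv.Perm (Fin n)) : ℕ → ℕ := fun i =>
  let F := fixList z
  if h : i < n then
    if z ⟨i, h⟩ = ⟨i, h⟩ then n + F.idxOf i else (z ⟨i, h⟩ : ℕ)
  else if i < n + F.length then F.getD (i - n) 0
  else if i % 2 = 0 then i + 1 else i - 1

/-- The descending embedding `ι_des` of involutions of `[n]` into fixed-point-free
involutions of `[2n]`, as a function on 0-based indices. -/
def iotaDes {n : ℕ} (z : Equiv.Perm (Fin n)) : ℕ → ℕ := fun i =>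
  let F := fixList z
  if h : i < n then
    if z ⟨i, h⟩ = ⟨i, h⟩ then n + F.length - 1 - F.idxOf i else (z ⟨i, h⟩ : ℕ)
  else if i < n + F.length then F.getD (n + F.length - 1 - i) 0
  else if i % 2 = 0 then i + 1 else i - 1

/-- The number of inversions of a function on `[0, m)`. -/
def lenFn (w : ℕ → ℕ) (m : ℕ) : ℕ :=
  ((Finset.range m ×ˢ Finset.range m).filter (fun p => p.1 < p.2 ∧ w p.2 < w p.1)).card

/-- Weak descents (0-based indices `i` with `0 ≤ i < n-1`). -/
def wDesEq (w : ℕ → ℕ) (n : ℕ) : Finset ℕ :=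
  (Finset.range (n-1)).filter (fun i => w i = i + 1 ∧ w (i+1) = i)

/-- Weak ascents. -/
def wAscEq (w : ℕ → ℕ) (n : ℕ) : Finset ℕ :=
  (Finset.range (n-1)).filter (fun i => n ≤ w i ∧ n ≤ w (i+1))

/-- Strict descents. -/
def wDesLt (w : ℕ → ℕ) (n : ℕ) : Finset ℕ :=
  ((Finset.range (n-1)).filter (fun i => w (i+1) < w i)) \ (wAscEq w n ∪ wDesEq w n)

/-- Strict ascents. -/
def wAscLt (w : ℕ → ℕ) (n : ℕ) : Finset ℕ :=
  ((Finset.range (n-1)).filter (fun i => w i < w (i+1))) \ wAscEq w n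

/-- Delete all boxes of `T` whose entry exceeds `n`. -/
def restrictT (T : List (List ℕ)) (n : ℕ) : List (List ℕ) :=
  (T.map (fun r => r.filter (fun x => decide (x ≤ n)))).filter (fun r => !r.isEmpty)

/-- The 0-based indices of the odd columns of `T`, in increasing order. -/
def oddColsList (T : List (List ℕ)) : List ℕ :=
  (List.range (T.headD []).length).filter (fun c => decide (colLen T c % 2 = 1))

/-- Given a standard tableau `T` with `n` boxes and `k` odd columns, place
`n+1, …, n+k` at the bottoms of the odd columns from left to right, then add
`n+k+1, n+k+3, …, 2n-1` to the first row and `n+k+2, n+k+4, …, 2n` to the second row. -/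
def iotaRow (n : ℕ) (T : List (List ℕ)) : List (List ℕ) :=
  let cols := oddColsList T
  let k := cols.length
  let T1 := (cols.zipIdx.map Prod.swap).foldl (fun S ci => addAtCol S ci.2 (n + 1 + ci.1)) T
  let T2 := (List.range ((n - k) / 2)).foldl (fun S m => addAtRow S 0 (n + k + 1 + 2*m)) T1
  (List.range ((n - k) / 2)).foldl (fun S m => addAtRow S 1 (n + k + 2 + 2*m)) T2

/-- The number of transfer points: 0-based `i < n` with `w i ≥ n` (1-based `w(i) > n`). -/
def transferCount (w : ℕ → ℕ) (n : ℕ) : ℕ :=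
  ((List.range n).filter (fun i => decide (n ≤ w i))).length

/-- `G^asc_n`: the image of the ascending embedding. -/
def GAsc (n : ℕ) : Set (ℕ → ℕ) := {f | ∃ w : Equiv.Perm (Fin n), w * w = 1 ∧ f = iotaAsc w}

/-- `G^des_n`: the image of the descending embedding. -/
def GDes (n : ℕ) : Set (ℕ → ℕ) := {f | ∃ w : Equiv.Perm (Fin n), w * w = 1 ∧ f = iotaDes w}

/-- The value `e(j)` from the statement of Theorem on column Beissinger dual
equivalence: for 1-based `j`, `e(j) = -j` if `y(j) = j`; `e(j) = j` if
`j ≠ y(j) ∈ {i-1, i, i+1}`; and `e(j) = y(j)` otherwise. -/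
def eVal {n : ℕ} (y : Equiv.Perm (Fin n)) (i j : ℕ) : ℤ :=
  if act y j = j then -(j : ℤ)
  else if act y j ∈ ({i-1, i, i+1} : Finset ℕ) then (j : ℤ)
  else (act y j : ℤ)

/-- Schensted column insertion, via the transpose. -/
def colInsertT (T : List (List ℕ)) (x : ℕ) : List (List ℕ) :=
  transposeT (rsInsert (transposeT T) x)

/-- The (0-indexed) row in which Schensted column insertion of `x` adds a box. -/
def colBumpRow (T : List (List ℕ)) (x : ℕ) : ℕ := rsBumpCol (transposeT T) x

/-- The alternative column Beissinger insertion `T ⇐cBS (a,b)`: if `a = b`, add `a`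
at the end of the first row; if `a < b`, column insert `a` (adding a box in row `i`)
and add `b` at the end of row `i+1`. -/
def cBSalt (T : List (List ℕ)) (a b : ℕ) : List (List ℕ) :=
  if a = b then addAtRow T 0 a
  else addAtRow (colInsertT T a) (colBumpRow T a + 1) b

/-! For a permutation `σ` of `ℕ`, let `rectWord σ i j` be the subword of its one-line word made of
the positions `< i` and the values `≤ j`. The row lengths of `P_RS (rectWord σ i j)` form a growth
diagram: from `(i, j)` to `(i + 1, j + 1)` they obey Fomin's local rule, because Schensted
insertion commutes with adding a new maximal entry at the end of a row, except that the entry is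
pushed one row down when the bump path ends in its row. The local rule is symmetric, so the
diagram of `σ⁻¹` is the transpose of that of `σ`. Along the edge `j = n` the diagram records the
rows in which `Q_RS` grows, and along the transposed edge the rows in which `P_RS` of the inverse
receives its new maximal entry, so the two tableaux are built in the same rows. -/

open List

lemma insertRow_of_forall_lt {r : List ℕ} {x : ℕ} (h : ∀ y ∈ r, y < x) :
    insertRow r x = (r ++ [x], none) := by
  have : r.findIdx? (fun y => decide (x < y)) = none := by
    simpa [List.findIdx?_eq_none_iff] using fun y hy => (h y hy).le
  simp [insertRow, this]

lemma eq_append_of_insertRow_eq_none {r r' : List ℕ} {x : ℕ}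
    (h : insertRow r x = (r', none)) : r' = r ++ [x] := by
  unfold insertRow at h
  split at h
  · exact (Prod.mk.inj h).1.symm
  · rename_i i hi
    have := (List.findIdx?_eq_some_iff_findIdx_eq.mp hi).1
    simp [List.getElem?_eq_getElem this] at h

lemma exists_eq_set_of_insertRow_eq_some {r r' : List ℕ} {x z : ℕ}
    (h : insertRow r x = (r', some z)) : ∃ i, ∃ hi : i < r.length, r' = r.set i x ∧ r[i] = z := by
  unfold insertRow at h
  split at h
  · simp at h
  · rename_i i hi
    have hlt := (List.findIdx?_eq_some_iff_findIdx_eq.mp hi).1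
    simp only [List.getElem?_eq_getElem hlt, Prod.mk.injEq, Option.some.injEq] at h
    exact ⟨i, hlt, h.1.symm, h.2⟩

lemma insertRow_append_of_eq_none {r r' : List ℕ} {y m : ℕ} (hy : y < m)
    (h : insertRow r y = (r', none)) : insertRow (r ++ [m]) y = (r', some m) := by
  have hr' := eq_append_of_insertRow_eq_none h
  unfold insertRow at h ⊢
  split at h
  · rename_i hnone
    simp [List.findIdx?_append, hnone, hy, hr']
  · rename_i i hi
    have := (List.findIdx?_eq_some_iff_findIdx_eq.mp hi).1
    simp at h
    omega

lemma insertRow_append_of_eq_some {r r' : List ℕ} {y z : ℕ} (m : ℕ)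
    (h : insertRow r y = (r', some z)) : insertRow (r ++ [m]) y = (r' ++ [m], some z) := by
  unfold insertRow at h ⊢
  split at h
  · simp at h
  · rename_i i hi
    have hlt := (List.findIdx?_eq_some_iff_findIdx_eq.mp hi).1
    simp only [Prod.mk.injEq] at h
    simp [List.findIdx?_append, hi, ← h.1, ← h.2, List.set_append_left _ _ hlt,
      List.getElem?_append_left hlt]

@[simp] lemma addAtRow_nil (R k : ℕ) : addAtRow [] R k = [[k]] := by
  simp [addAtRow]

@[simp] lemma addAtRow_cons_zero (r : List ℕ) (rest : List (List ℕ)) (k : ℕ) :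
    addAtRow (r :: rest) 0 k = (r ++ [k]) :: rest := by
  simp [addAtRow]

@[simp] lemma addAtRow_cons_succ (r : List ℕ) (rest : List (List ℕ)) (R k : ℕ) :
    addAtRow (r :: rest) (R + 1) k = r :: addAtRow rest R k := by
  by_cases h : R < rest.length <;> simp [addAtRow, h]

lemma rsInsert_of_forall_lt {T : List (List ℕ)} {x : ℕ} (h : ∀ z ∈ T.flatten, z < x) :
    rsInsert T x = addAtRow T 0 x ∧ rsBumpRow T x = 0 := by
  cases T with
  | nil => simp [rsInsert, rsBumpRow]
  | cons r rest =>
    have hrow := insertRow_of_forall_lt (r := r) (x := x) fun y hy => h y (by simp [hy])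
    simp [rsInsert, rsBumpRow, hrow]

lemma mem_flatten_rsInsert {T : List (List ℕ)} {x z : ℕ} (hz : z ∈ (rsInsert T x).flatten) :
    z ∈ T.flatten ∨ z = x := by
  induction T generalizing x with
  | nil => simpa [rsInsert] using hz
  | cons r rest ih =>
    rcases hrow : insertRow r x with ⟨r', _ | y⟩
    · obtain rfl := eq_append_of_insertRow_eq_none hrow
      simp only [rsInsert, hrow, flatten_cons, mem_append, mem_singleton] at hz ⊢
      tauto
    · obtain ⟨i, hi, rfl, rfl⟩ := exists_eq_set_of_insertRow_eq_some hrow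
      simp only [rsInsert, hrow, flatten_cons, mem_append] at hz ⊢
      rcases hz with hz | hz
      · exact (mem_or_eq_of_mem_set hz).imp_left Or.inl
      · exact .inl ((ih hz).elim .inr fun h => .inl (h ▸ getElem_mem hi))

lemma mem_of_mem_flatten_PRS {u : List ℕ} {z : ℕ} (hz : z ∈ (PRS u).flatten) : z ∈ u := by
  suffices ∀ T : List (List ℕ), z ∈ (u.foldl rsInsert T).flatten → z ∈ T.flatten ∨ z ∈ u by
    simpa using this [] hz
  clear hz
  induction u with
  | nil => simp
  | cons x u ih =>
    intro T h
    rcases ih (rsInsert T x) h with h | h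
    · exact (mem_flatten_rsInsert h).imp id fun (h : z = x) => h ▸ mem_cons_self
    · exact .inr (mem_cons_of_mem x h)

lemma rsBumpRow_le_length (T : List (List ℕ)) (x : ℕ) : rsBumpRow T x ≤ T.length := by
  induction T generalizing x with
  | nil => simp [rsBumpRow]
  | cons r rest ih =>
    rcases hrow : insertRow r x with ⟨r', _ | z⟩
    · simp [rsBumpRow, hrow]
    · simpa [rsBumpRow, hrow] using ih z

lemma length_rsInsert (T : List (List ℕ)) (x : ℕ) :
    (rsInsert T x).length = T.length + if rsBumpRow T x = T.length then 1 else 0 := by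
  induction T generalizing x with
  | nil => simp [rsInsert, rsBumpRow]
  | cons r rest ih =>
    rcases hrow : insertRow r x with ⟨r', _ | z⟩
    · simp [rsInsert, rsBumpRow, hrow]
    · simp only [rsInsert, rsBumpRow, hrow, length_cons, ih z]
      split_ifs <;> omega

lemma ite_le_length_rsInsert {T : List (List ℕ)} {R : ℕ} (y : ℕ) (hR : R ≤ T.length) :
    (if rsBumpRow T y = R then R + 1 else R) ≤ (rsInsert T y).length := by
  have := rsBumpRow_le_length T y
  rw [length_rsInsert]
  split_ifs <;> omega

def rowLengths (T : List (List ℕ)) (R : ℕ) : ℕ := (T.getD R []).length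

lemma rowLengths_cons (r : List ℕ) (T : List (List ℕ)) (k : ℕ) :
    rowLengths (r :: T) (k + 1) = rowLengths T k := by
  simp [rowLengths]

lemma rowLengths_rsInsert (T : List (List ℕ)) (x : ℕ) :
    rowLengths (rsInsert T x) = rowLengths T + Pi.single (rsBumpRow T x) 1 := by
  induction T generalizing x with
  | nil => funext k; cases k <;> simp [rsInsert, rsBumpRow, rowLengths]
  | cons r rest ih =>
    funext k
    rcases hrow : insertRow r x with ⟨r', _ | z⟩
    · obtain rfl := eq_append_of_insertRow_eq_none hrow
      cases k <;> simp [rsInsert, rsBumpRow, hrow, rowLengths]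
    · obtain ⟨i, hi, rfl, -⟩ := exists_eq_set_of_insertRow_eq_some hrow
      cases k with
      | zero => simp [rsInsert, rsBumpRow, hrow, rowLengths]
      | succ k =>
        simpa [rsInsert, rsBumpRow, hrow, rowLengths_cons, Pi.single_apply] using congrFun (ih z) k

lemma rowLengths_addAtRow {T : List (List ℕ)} {R : ℕ} (k : ℕ) (hR : R ≤ T.length) :
    rowLengths (addAtRow T R k) = rowLengths T + Pi.single R 1 := by
  induction T generalizing R with
  | nil =>
    obtain rfl : R = 0 := by simpa using hR
    funext j; cases j <;> simp [rowLengths]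
  | cons r rest ih =>
    funext j
    cases R with
    | zero => cases j <;> simp [rowLengths]
    | succ R =>
      cases j with
      | zero => simp [rowLengths]
      | succ j =>
        simpa [rowLengths_cons, Pi.single_apply] using congrFun (ih (by simpa using hR)) j

lemma rsInsert_addAtRow_of_lt {T : List (List ℕ)} {R y m : ℕ} (hT : ∀ z ∈ T.flatten, z < m)
    (hy : y < m) (hR : R ≤ T.length) :
    rsInsert (addAtRow T R m) y =
      addAtRow (rsInsert T y) (if rsBumpRow T y = R then R + 1 else R) m := by
  induction T generalizing R y with
  | nil =>
    obtain rfl : R = 0 := by simpa using hR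
    simp [rsInsert, rsBumpRow, insertRow, hy]
  | cons r rest ih =>
    have hTr : ∀ z ∈ r, z < m := fun z hz => hT z (by simp [hz])
    have hTrest : ∀ z ∈ rest.flatten, z < m := fun z hz => hT z (by simp [hz])
    rcases hrow : insertRow r y with ⟨r', _ | z⟩
    · cases R with
      | zero =>
        simp [rsInsert, rsBumpRow, hrow, insertRow_append_of_eq_none hy hrow,
          (rsInsert_of_forall_lt hTrest).1]
      | succ R => simp [rsInsert, rsBumpRow, hrow]
    · obtain ⟨i, hi, -, rfl⟩ := exists_eq_set_of_insertRow_eq_some hrow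
      cases R with
      | zero => simp [rsInsert, rsBumpRow, hrow, insertRow_append_of_eq_some m hrow]
      | succ R =>
        simp only [rsInsert, rsBumpRow, hrow, addAtRow_cons_succ,
          ih hTrest (hTr _ (getElem_mem hi)) (by simpa using hR)]
        split_ifs <;> simp_all

lemma foldl_rsInsert_addAtRow_of_lt {b : List ℕ} {T : List (List ℕ)} {R m : ℕ}
    (hb : ∀ y ∈ b, y < m) (hT : ∀ z ∈ T.flatten, z < m) (hR : R ≤ T.length) :
    ∃ R' ≤ (b.foldl rsInsert T).length,
      b.foldl rsInsert (addAtRow T R m) = addAtRow (b.foldl rsInsert T) R' m := by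
  induction b generalizing T R with
  | nil => exact ⟨R, hR, rfl⟩
  | cons y b ih =>
    have hy : y < m := hb y mem_cons_self
    rw [foldl_cons, foldl_cons, rsInsert_addAtRow_of_lt hT hy hR]
    exact ih (fun y' hy' => hb y' (mem_cons_of_mem y hy'))
      (fun z hz => (mem_flatten_rsInsert hz).elim (hT z) (· ▸ hy))
      (ite_le_length_rsInsert y hR)

lemma PRS_append (u v : List ℕ) : PRS (u ++ v) = v.foldl rsInsert (PRS u) :=
  foldl_append

lemma PRS_concat (u : List ℕ) (x : ℕ) : PRS (u ++ [x]) = rsInsert (PRS u) x := by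
  simp [PRS_append]

lemma RSpair_fst (u : List ℕ) : (RSpair u).1 = PRS u := by
  suffices ∀ (l : List (ℕ × ℕ)) (pq : List (List ℕ) × List (List ℕ)),
      (l.foldl (fun pq ix =>
        (rsInsert pq.1 ix.2, addAtRow pq.2 (rsBumpRow pq.1 ix.2) (ix.1 + 1))) pq).1
        = (l.map Prod.snd).foldl rsInsert pq.1 by
    rw [RSpair, this, map_map]
    exact congrArg (foldl rsInsert []) (zipIdx_map_fst 0 u)
  intro l
  induction l with
  | nil => intro pq; rfl
  | cons a l ih => intro pq; simp only [foldl_cons, map_cons]; rw [ih]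

lemma QRS_concat (u : List ℕ) (x : ℕ) :
    QRS (u ++ [x]) = addAtRow (QRS u) (rsBumpRow (PRS u) x) (u.length + 1) := by
  rw [QRS, RSpair, zipIdx_append, map_append, foldl_append, ← RSpair_fst]
  simp [RSpair, QRS]

lemma filter_le_succ_of_notMem {L : List ℕ} {j : ℕ} (h : j + 1 ∉ L) :
    L.filter (· ≤ j + 1) = L.filter (· ≤ j) :=
  filter_congr fun x hx => by
    have : x ≠ j + 1 := fun hx' => h (hx' ▸ hx)
    simp only [decide_eq_decide]
    omega

lemma exists_filter_le_succ_eq_append {L : List ℕ} {j : ℕ} (hL : L.Nodup) (h : j + 1 ∈ L) :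
    ∃ a b, L.filter (· ≤ j) = a ++ b ∧ L.filter (· ≤ j + 1) = a ++ (j + 1) :: b := by
  obtain ⟨s, t, rfl⟩ := append_of_mem h
  have hs : j + 1 ∉ s := ((nodup_append.mp hL).2.2 (j + 1) · (j + 1) mem_cons_self rfl)
  have ht : j + 1 ∉ t := (nodup_cons.mp (nodup_append.mp hL).2.1).1
  refine ⟨s.filter (· ≤ j), t.filter (· ≤ j), by simp [filter_append], ?_⟩
  simp [filter_append, filter_le_succ_of_notMem hs, filter_le_succ_of_notMem ht]

section GrowthDiagram

variable (σ : Equiv.Perm ℕ)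

def prefixWord (i : ℕ) : List ℕ := (range i).map (σ · + 1)

def rectWord (i j : ℕ) : List ℕ := (prefixWord σ i).filter (· ≤ j)

lemma length_prefixWord (i : ℕ) : (prefixWord σ i).length = i := by
  simp [prefixWord]

lemma nodup_prefixWord (i : ℕ) : (prefixWord σ i).Nodup :=
  (nodup_range).map fun _ _ h => σ.injective (by simpa using h)

lemma succ_mem_prefixWord_iff {i j : ℕ} : j + 1 ∈ prefixWord σ i ↔ σ⁻¹ j < i := by
  simp only [prefixWord, mem_map, mem_range, Nat.add_right_cancel_iff]
  constructor
  · rintro ⟨p, hp, rfl⟩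
    simpa using hp
  · exact fun h => ⟨σ⁻¹ j, h, by simp⟩

lemma rectWord_eq_prefixWord {i j : ℕ} (h : ∀ p < i, σ p < j) :
    rectWord σ i j = prefixWord σ i := by
  refine filter_eq_self.mpr fun x hx => ?_
  obtain ⟨p, hp, rfl⟩ := by simpa [prefixWord] using hx
  simpa using h p hp

@[simp] lemma rectWord_zero_left (j : ℕ) : rectWord σ 0 j = [] := rfl

@[simp] lemma rectWord_zero_right (i : ℕ) : rectWord σ i 0 = [] := by
  simp [rectWord, prefixWord]

lemma rectWord_succ_left_of_lt {i j : ℕ} (h : σ i < j) :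
    rectWord σ (i + 1) j = rectWord σ i j ++ [σ i + 1] := by
  simp [rectWord, prefixWord, range_succ, filter_append, h]

lemma rectWord_succ_left_of_le {i j : ℕ} (h : j ≤ σ i) :
    rectWord σ (i + 1) j = rectWord σ i j := by
  simp [rectWord, prefixWord, range_succ, filter_append, h]

lemma rectWord_succ_right_of_le {i j : ℕ} (h : i ≤ σ⁻¹ j) :
    rectWord σ i (j + 1) = rectWord σ i j :=
  filter_le_succ_of_notMem fun hm => by
    have := (succ_mem_prefixWord_iff σ).mp hm
    omega

lemma le_of_mem_rectWord {i j z : ℕ} (hz : z ∈ rectWord σ i j) : z ≤ j := by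
  simpa using (mem_filter.mp hz).2

lemma lt_of_mem_flatten_PRS_rectWord (i j : ℕ) :
    ∀ z ∈ (PRS (rectWord σ i j)).flatten, z < j + 1 := fun _ hz =>
  Nat.lt_succ_of_le (le_of_mem_rectWord σ (mem_of_mem_flatten_PRS hz))

lemma exists_PRS_rectWord_succ_right {i j : ℕ} (h : σ⁻¹ j < i) :
    ∃ R ≤ (PRS (rectWord σ i j)).length,
      PRS (rectWord σ i (j + 1)) = addAtRow (PRS (rectWord σ i j)) R (j + 1) := by
  obtain ⟨a, b, hab, hab'⟩ := exists_filter_le_succ_eq_append (nodup_prefixWord σ i)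
    ((succ_mem_prefixWord_iff σ).mpr h)
  have hlt : ∀ z ∈ a ++ b, z < j + 1 := fun z hz =>
    Nat.lt_succ_of_le (le_of_mem_rectWord σ (by rwa [rectWord, hab]))
  have ha : ∀ z ∈ (PRS a).flatten, z < j + 1 := fun z hz =>
    hlt z (mem_append_left b (mem_of_mem_flatten_PRS hz))
  obtain ⟨R, hR, hfold⟩ :=
    foldl_rsInsert_addAtRow_of_lt (fun y hy => hlt y (mem_append_right a hy)) ha (Nat.zero_le _)
  refine ⟨R, by rwa [rectWord, hab, PRS_append], ?_⟩
  rw [rectWord, rectWord, hab, hab', PRS_append, PRS_append, foldl_cons,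
    (rsInsert_of_forall_lt ha).1, hfold]

def growthShape (i j : ℕ) : ℕ → ℕ := rowLengths (PRS (rectWord σ i j))

lemma growthShape_succ_left_of_le {i j : ℕ} (h : j ≤ σ i) :
    growthShape σ (i + 1) j = growthShape σ i j := by
  rw [growthShape, rectWord_succ_left_of_le σ h, growthShape]

lemma growthShape_succ_right_of_le {i j : ℕ} (h : i ≤ σ⁻¹ j) :
    growthShape σ i (j + 1) = growthShape σ i j := by
  rw [growthShape, rectWord_succ_right_of_le σ h, growthShape]

lemma growthShape_succ_left_of_lt {i j : ℕ} (h : σ i < j) :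
    growthShape σ (i + 1) j =
      growthShape σ i j + Pi.single (rsBumpRow (PRS (rectWord σ i j)) (σ i + 1)) 1 := by
  rw [growthShape, rectWord_succ_left_of_lt σ h, PRS_concat, rowLengths_rsInsert, growthShape]

lemma growthShape_succ_succ_of_eq {i j : ℕ} (h : σ i = j) :
    growthShape σ (i + 1) (j + 1) = growthShape σ i j + Pi.single 0 1 := by
  have hi : σ⁻¹ j = i := by simp [← h]
  rw [growthShape, rectWord_succ_left_of_lt σ (by omega), rectWord_succ_right_of_le σ hi.ge,
    PRS_concat, rowLengths_rsInsert, h,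
    (rsInsert_of_forall_lt (lt_of_mem_flatten_PRS_rectWord σ i j)).2, growthShape]

/-- Fomin's local rule, in terms of the rows `r` and `R` in which the two neighbouring shapes
of a growth-diagram square grew. -/
def localRule (s : ℕ → ℕ) (r R : ℕ) : ℕ → ℕ :=
  s + Pi.single r 1 + Pi.single (if r = R then R + 1 else R) 1

lemma localRule_comm (s : ℕ → ℕ) (r R : ℕ) : localRule s r R = localRule s R r := by
  unfold localRule
  split_ifs with h h' h'
  · rw [h]
  · exact absurd h.symm h'
  · exact absurd h'.symm h
  · exact add_right_comm _ _ _

lemma eq_of_add_single_eq_add_single {s : ℕ → ℕ} {a b : ℕ}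
    (h : s + Pi.single a 1 = s + Pi.single b 1) : a = b := by
  simpa [Pi.single_apply] using congrFun h a

lemma growthShape_succ_succ_of_lt {i j : ℕ} (hi : σ i < j) (hj : σ⁻¹ j < i) :
    ∃ r R, growthShape σ (i + 1) j = growthShape σ i j + Pi.single r 1 ∧
      growthShape σ i (j + 1) = growthShape σ i j + Pi.single R 1 ∧
      growthShape σ (i + 1) (j + 1) = localRule (growthShape σ i j) r R := by
  obtain ⟨R, hR, hstep⟩ := exists_PRS_rectWord_succ_right σ hj
  set T := PRS (rectWord σ i j)
  refine ⟨rsBumpRow T (σ i + 1), R, growthShape_succ_left_of_lt σ hi, ?_, ?_⟩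
  · rw [growthShape, hstep, rowLengths_addAtRow _ hR, growthShape]
  · rw [growthShape, rectWord_succ_left_of_lt σ (by omega), PRS_concat, hstep,
      rsInsert_addAtRow_of_lt (lt_of_mem_flatten_PRS_rectWord σ i j) (by omega) hR,
      rowLengths_addAtRow _ (ite_le_length_rsInsert _ hR), rowLengths_rsInsert, localRule,
      growthShape]

theorem growthShape_inv (i j : ℕ) :
    growthShape σ⁻¹ j i = growthShape σ i j := by
  induction i generalizing j with
  | zero => simp [growthShape]
  | succ i ih =>
    induction j with
    | zero => simp [growthShape]
    | succ j ihj =>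
      rcases lt_or_ge j (σ i) with hσi | hσi
      · rw [growthShape_succ_left_of_le σ hσi, growthShape_succ_right_of_le σ⁻¹ (by simpa), ih]
      rcases lt_or_ge i (σ⁻¹ j) with hσj | hσj
      · rw [growthShape_succ_right_of_le σ hσj, growthShape_succ_left_of_le σ⁻¹ hσj, ihj]
      rcases hσi.lt_or_eq with hσi | hσi
      · have hσj : σ⁻¹ j < i := hσj.lt_of_ne fun h => hσi.ne (by rw [← h]; simp)
        obtain ⟨r, R, h₁, h₂, h₃⟩ := growthShape_succ_succ_of_lt σ hσi hσj
        obtain ⟨r', R', h₁', h₂', h₃'⟩ := growthShape_succ_succ_of_lt σ⁻¹ hσj (by simpa)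
        rw [ih j] at h₁' h₂' h₃'
        have hr' : r' = R :=
          eq_of_add_single_eq_add_single (h₁'.symm.trans ((ih (j + 1)).trans h₂))
        have hR' : R' = r := eq_of_add_single_eq_add_single (h₂'.symm.trans (ihj.trans h₁))
        rw [h₃', h₃, hr', hR', localRule_comm]
      · have hi : σ⁻¹ j = i := by rw [← hσi]; simp
        rw [growthShape_succ_succ_of_eq σ hσi, growthShape_succ_succ_of_eq σ⁻¹ hi, ih]

theorem QRS_rectWord_eq_PRS_rectWord_inv {n k : ℕ} (hσ : ∀ p < k, σ p < n) :
    QRS (rectWord σ k n) = PRS (rectWord σ⁻¹ n k) := by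
  induction k with
  | zero => rw [rectWord_zero_left, rectWord_zero_right]; rfl
  | succ k ih =>
    have hk : σ k < n := hσ k (Nat.lt_succ_self k)
    obtain ⟨R, hR, hstep⟩ := exists_PRS_rectWord_succ_right σ⁻¹ (by simpa using hk)
    have hrow : rsBumpRow (PRS (rectWord σ k n)) (σ k + 1) = R := by
      refine eq_of_add_single_eq_add_single (s := growthShape σ k n) ?_
      calc _ = growthShape σ (k + 1) n := (growthShape_succ_left_of_lt σ hk).symm
        _ = growthShape σ⁻¹ n (k + 1) := (growthShape_inv σ (k + 1) n).symm
        _ = growthShape σ⁻¹ n k + Pi.single R 1 := by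
          rw [growthShape, hstep, rowLengths_addAtRow _ hR, growthShape]
        _ = growthShape σ k n + Pi.single R 1 := by rw [growthShape_inv]
    have hlen : (rectWord σ k n).length = k := by
      rw [rectWord_eq_prefixWord σ fun p hp => hσ p (Nat.lt_succ_of_lt hp), length_prefixWord]
    rw [rectWord_succ_left_of_lt σ hk, QRS_concat, hlen, hrow,
      ih fun p hp => hσ p (Nat.lt_succ_of_lt hp), hstep]

end GrowthDiagram

lemma coe_extendDomain_equivSubtype {n : ℕ} (w : Equiv.Perm (Fin n)) :
    ⇑(w.extendDomain Fin.equivSubtype) = permFn w := by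
  funext p
  by_cases hp : p < n
  · rw [Equiv.Perm.extendDomain_apply_subtype w Fin.equivSubtype hp]
    simp [permFn, hp, Fin.equivSubtype]
  · rw [Equiv.Perm.extendDomain_apply_not_subtype w Fin.equivSubtype hp]
    simp [permFn, hp]

lemma extendDomain_equivSubtype_lt {n : ℕ} (w : Equiv.Perm (Fin n)) {p : ℕ} (hp : p < n) :
    w.extendDomain Fin.equivSubtype p < n := by
  simp [coe_extendDomain_equivSubtype, permFn, hp]

lemma wordOf_eq_rectWord {n : ℕ} (w : Equiv.Perm (Fin n)) :
    wordOf w = rectWord (w.extendDomain Fin.equivSubtype) n n := by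
  rw [rectWord_eq_prefixWord _ fun _ => extendDomain_equivSubtype_lt w,
    wordOf, wordFn, prefixWord, coe_extendDomain_equivSubtype]

/-- `Q_RS(w) = P_RS(w⁻¹)`. -/
theorem qrs_eq_prs_inv (n : ℕ) (w : Equiv.Perm (Fin n)) :
    QRS (wordOf w) = PRS (wordOf w⁻¹) := by
  rw [wordOf_eq_rectWord, wordOf_eq_rectWord, ← Equiv.Perm.extendDomain_inv]
  exact QRS_rectWord_eq_PRS_rectWord_inv _ fun _ => extendDomain_equivSubtype_lt w

end GelfandRSK
end

section
/- Transpose intertwines the two variants of column Beissinger insertion: for any partially standard tableau T and integers a ≤ b, (T ←cBS (a,b))^⊤ = T^⊤ ⇐cBS (a,b), where ⇐cBS uses Schensted column insertion of a and adds b at the end of the next row. -/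
/-!
A tableau is determined by its entry function `(i, c) ↦ T[i][c]?` once its rows are nonempty,
and for a tableau of partition shape transposition just swaps the two arguments of this
function. Hence appending `k` to column `c` is the transpose of appending `k` to row `c` of
the transpose, provided column `c` is addable, i.e. some row (possibly the empty row past the
end) has length exactly `c`. Column Beissinger insertion always appends to such a column:
column `0` when `a = b`, and otherwise the column just right of the box created by Schensted
insertion of `a`. Column strictness keeps the bumping path weakly to the left, so Schensted
insertion preserves partition shape, and column insertion into `Tᵀ` is row insertion into
`Tᵀᵀ = T`.
-/

namespace GelfandRSK

lemma getElem?_filterMap_of_pairwise {α β : Type*} {f : α → Option β} {l : List α}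
    (hl : l.Pairwise fun a b => (f b).isSome → (f a).isSome) (i : ℕ) :
    (l.filterMap f)[i]? = l[i]?.bind f := by
  induction l generalizing i with
  | nil => simp
  | cons a l ih =>
    rw [List.pairwise_cons] at hl
    cases hfa : f a with
    | some x => cases i <;> simp [hfa, ih hl.2]
    | none =>
      have hnone : ∀ b ∈ l, f b = none := fun b hb => by
        simpa [hfa] using mt (hl.1 b hb)
      rw [List.filterMap_cons_none hfa, List.filterMap_eq_nil_iff.mpr hnone]
      cases i with
      | zero => simp [hfa]
      | succ i =>
        cases h : l[i]? with
        | none => simp [h]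
        | some b => simp [h, hnone b (List.mem_of_getElem? h)]

lemma antitone_add_ite_of_lt {f : ℕ → ℕ} (hf : Antitone f) {r : ℕ}
    (hr : ∀ m < r, f r < f m) : Antitone fun i => f i + if i = r then 1 else 0 :=
  fun i j hij => by
    have := hf hij
    dsimp only
    split_ifs with hj hi hi
    · omega
    · have := hr i (by omega); rw [hj]; omega
    · omega
    · omega

def rowLen (T : List (List ℕ)) (i : ℕ) : ℕ := (T.getD i []).length

def entry (T : List (List ℕ)) (i c : ℕ) : Option ℕ := (T.getD i [])[c]?

@[simp] lemma rowLen_cons_zero (r : List ℕ) (T : List (List ℕ)) :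
    rowLen (r :: T) 0 = r.length :=
  rfl

@[simp] lemma rowLen_cons_succ (r : List ℕ) (T : List (List ℕ)) (i : ℕ) :
    rowLen (r :: T) (i + 1) = rowLen T i :=
  rfl

lemma rowLen_of_length_le {T : List (List ℕ)} {i : ℕ} (h : T.length ≤ i) :
    rowLen T i = 0 := by
  rw [rowLen, List.getD_eq_default _ _ h, List.length_nil]

lemma rowLen_of_lt_length {T : List (List ℕ)} {i : ℕ} (h : i < T.length) :
    rowLen T i = T[i].length := by
  rw [rowLen, List.getD_eq_getElem _ _ h]

lemma antitone_rowLen_tail {r : List ℕ} {T : List (List ℕ)} (hT : Antitone (rowLen (r :: T))) :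
    Antitone (rowLen T) :=
  fun _ _ h => hT (Nat.succ_le_succ h)

lemma pairwise_of_antitone_rowLen {T : List (List ℕ)} (hT : Antitone (rowLen T)) :
    T.Pairwise (fun r₁ r₂ => r₂.length ≤ r₁.length) :=
  List.pairwise_iff_getElem.mpr fun i j hi hj hij => by
    simpa [rowLen_of_lt_length, hi, hj] using hT hij.le

lemma antitone_rowLen_of_isChain {T : List (List ℕ)}
    (h : T.IsChain (fun r₁ r₂ => r₂.length ≤ r₁.length)) : Antitone (rowLen T) := by
  have hp : T.Pairwise (fun r₁ r₂ => r₂.length ≤ r₁.length) :=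
    List.isChain_iff_pairwise.mp h
  intro i j hij
  rcases hij.lt_or_eq with hij | rfl
  · by_cases hj : j < T.length
    · rw [rowLen_of_lt_length hj, rowLen_of_lt_length (hij.trans hj)]
      exact List.pairwise_iff_getElem.mp hp i j _ hj hij
    · simp [rowLen_of_length_le (not_lt.mp hj)]
  · rfl

lemma ext_entry {T T' : List (List ℕ)} (hT : ∀ r ∈ T, r ≠ []) (hT' : ∀ r ∈ T', r ≠ [])
    (h : ∀ i c, entry T i c = entry T' i c) : T = T' := by
  apply List.ext_getElem?
  intro i
  have h0 := h i 0
  cases hi : T[i]? <;> cases hi' : T'[i]? <;>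
    simp only [entry, List.getD_eq_getElem?_getD, hi, hi', Option.getD] at h0
  · rfl
  · exact absurd (by simpa using h0) (hT' _ (List.mem_of_getElem? hi'))
  · exact absurd (by simpa using h0.symm) (hT _ (List.mem_of_getElem? hi))
  · congr 1
    apply List.ext_getElem?
    intro c
    simpa [entry, List.getD_eq_getElem?_getD, hi, hi'] using h i c

lemma length_transposeT (T : List (List ℕ)) : (transposeT T).length = rowLen T 0 := by
  cases T <;> simp [transposeT, rowLen]

lemma ne_nil_of_mem_transposeT {T : List (List ℕ)} {r : List ℕ} (hr : r ∈ transposeT T) :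
    r ≠ [] := by
  obtain ⟨c, hc, rfl⟩ := List.mem_map.mp hr
  cases T with
  | nil => simp at hc
  | cons r₀ T =>
    have hc : c < r₀.length := by simpa using hc
    simp [List.getElem?_eq_getElem hc]

lemma getD_transposeT {T : List (List ℕ)} (hT : Antitone (rowLen T)) (c : ℕ) :
    (transposeT T).getD c [] = T.filterMap (·[c]?) := by
  have hhead : (T.headD []).length = rowLen T 0 := by cases T <;> rfl
  rw [List.getD_eq_getElem?_getD, transposeT, hhead, List.getElem?_map]
  by_cases hc : c < rowLen T 0
  · rw [List.getElem?_range hc]; rfl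
  · rw [List.getElem?_eq_none (by simpa using hc), Option.map_none, Option.getD_none,
      eq_comm, List.filterMap_eq_nil_iff]
    intro r hr
    obtain ⟨i, hi, rfl⟩ := List.getElem_of_mem hr
    have := hT (Nat.zero_le i)
    rw [rowLen_of_lt_length hi] at this
    exact List.getElem?_eq_none (by omega)

lemma entry_transposeT {T : List (List ℕ)} (hT : Antitone (rowLen T)) (c i : ℕ) :
    entry (transposeT T) c i = entry T i c := by
  have hp : T.Pairwise fun r₁ r₂ => (r₂[c]?).isSome → (r₁[c]?).isSome :=
    (pairwise_of_antitone_rowLen hT).imp fun hle h => by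
      simp only [isSome_getElem?] at h ⊢; omega
  rw [entry, getD_transposeT hT, getElem?_filterMap_of_pairwise hp, entry,
    List.getD_eq_getElem?_getD]
  cases T[i]? <;> rfl

lemma length_filterMap_getElem?_eq_findIdx {T : List (List ℕ)}
    (hT : T.Pairwise fun r₁ r₂ => r₂.length ≤ r₁.length) (c : ℕ) :
    (T.filterMap (·[c]?)).length = T.findIdx (fun r => decide (r.length ≤ c)) := by
  induction T with
  | nil => rfl
  | cons r T ih =>
    rw [List.pairwise_cons] at hT
    by_cases hc : r.length ≤ c
    · rw [List.filterMap_cons_none (f := (·[c]?)) (List.getElem?_eq_none hc),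
        List.filterMap_eq_nil_iff.mpr fun r' hr' => List.getElem?_eq_none (by
          have := hT.1 r' hr'; omega)]
      simp [List.findIdx_cons, hc]
    · rw [List.filterMap_cons_some (f := (·[c]?)) (List.getElem?_eq_getElem (by omega))]
      simp [List.findIdx_cons, hc, ih hT.2]

lemma rowLen_transposeT {T : List (List ℕ)} (hT : Antitone (rowLen T)) (c : ℕ) :
    rowLen (transposeT T) c = T.findIdx (fun r => decide (r.length ≤ c)) := by
  rw [rowLen, getD_transposeT hT,
    length_filterMap_getElem?_eq_findIdx (pairwise_of_antitone_rowLen hT)]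

lemma antitone_rowLen_transposeT {T : List (List ℕ)} (hT : Antitone (rowLen T)) :
    Antitone (rowLen (transposeT T)) := fun c c' hcc' => by
  simp only [rowLen_transposeT hT]
  exact List.findIdx_le_findIdx fun r _ h => by simp only [decide_eq_true_eq] at h ⊢; omega

lemma transposeT_transposeT {T : List (List ℕ)} (hne : ∀ r ∈ T, r ≠ [])
    (hT : Antitone (rowLen T)) : transposeT (transposeT T) = T :=
  ext_entry (fun _ => ne_nil_of_mem_transposeT) hne fun i c => by
    rw [entry_transposeT (antitone_rowLen_transposeT hT), entry_transposeT hT]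

lemma getD_addAtRow {T : List (List ℕ)} {r : ℕ} (hr : r ≤ T.length) (k i : ℕ) :
    (addAtRow T r k).getD i [] = if i = r then T.getD r [] ++ [k] else T.getD i [] := by
  unfold addAtRow
  split_ifs with hrT hir hir
  · subst hir; simp [List.getD_eq_getElem?_getD, hrT]
  · simp [List.getD_eq_getElem?_getD, Ne.symm hir]
  · obtain rfl : r = T.length := by omega
    subst hir
    simp [List.getD_eq_getElem?_getD]
  · rw [List.getD_eq_getElem?_getD, List.getD_eq_getElem?_getD, List.getElem?_append]
    split_ifs with hi
    · rfl
    · simp [List.getElem?_eq_none (show T.length ≤ i by omega), show i - T.length ≠ 0 by omega]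

lemma rowLen_addAtRow {T : List (List ℕ)} {r : ℕ} (hr : r ≤ T.length) (k i : ℕ) :
    rowLen (addAtRow T r k) i = rowLen T i + if i = r then 1 else 0 := by
  rw [rowLen, getD_addAtRow hr]
  split_ifs with h <;> simp [rowLen, h]

lemma entry_addAtRow {T : List (List ℕ)} {r : ℕ} (hr : r ≤ T.length) (k i c : ℕ) :
    entry (addAtRow T r k) i c = if i = r ∧ c = rowLen T r then some k else entry T i c := by
  rw [entry, getD_addAtRow hr]
  by_cases hi : i = r
  · subst hi
    rw [if_pos rfl, List.getElem?_append]
    split_ifs with h₁ h₂ h₂ <;> simp_all [entry, rowLen]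
    omega
  · simp [hi, entry]

lemma ne_nil_of_mem_addAtRow {T : List (List ℕ)} (hT : ∀ r ∈ T, r ≠ []) (r k : ℕ) :
    ∀ s ∈ addAtRow T r k, s ≠ [] := by
  intro s hs
  unfold addAtRow at hs
  split_ifs at hs
  · rcases List.mem_or_eq_of_mem_set hs with hs | rfl
    · exact hT s hs
    · simp
  · rcases List.mem_append.mp hs with hs | hs
    · exact hT s hs
    · simp_all

lemma rowLen_findIdx_length_le {T : List (List ℕ)} (hT : Antitone (rowLen T)) (i : ℕ) :
    rowLen T (T.findIdx (fun r => decide (r.length ≤ rowLen T i))) = rowLen T i := by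
  set p := T.findIdx (fun r => decide (r.length ≤ rowLen T i))
  have hpi : p ≤ i := by
    by_contra! hip
    have hi : i < T.length := hip.trans_le List.findIdx_le_length
    have := List.not_of_lt_findIdx hip
    simp [rowLen_of_lt_length hi] at this
  refine le_antisymm ?_ (hT hpi)
  by_cases hp : p < T.length
  · simpa [rowLen_of_lt_length hp] using List.findIdx_getElem (w := hp)
  · simp [rowLen_of_length_le (not_lt.mp hp)]

lemma transposeT_addAtCol {T : List (List ℕ)} (hT : Antitone (rowLen T)) (i k : ℕ) :
    transposeT (addAtCol T (rowLen T i) k) = addAtRow (transposeT T) (rowLen T i) k := by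
  set c := rowLen T i
  set p := T.findIdx (fun r => decide (r.length ≤ c))
  have hp : p ≤ T.length := List.findIdx_le_length
  have hpc : rowLen T p = c := rowLen_findIdx_length_le hT i
  have habove : ∀ m < p, rowLen T p < rowLen T m := fun m hm => by
    have := List.not_of_lt_findIdx hm
    simp only [decide_eq_false_iff_not, not_le] at this
    rwa [hpc, rowLen_of_lt_length (hm.trans_le hp)]
  have hc : c ≤ (transposeT T).length := length_transposeT T ▸ hT (Nat.zero_le i)
  have hX : Antitone (rowLen (addAtRow T p k)) :=
    (funext (rowLen_addAtRow hp k)).symm ▸ antitone_add_ite_of_lt hT habove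
  refine ext_entry (fun _ => ne_nil_of_mem_transposeT)
    (ne_nil_of_mem_addAtRow (fun _ => ne_nil_of_mem_transposeT) _ _) fun c' i' => ?_
  rw [addAtCol, entry_transposeT hX, entry_addAtRow hp, entry_addAtRow hc, entry_transposeT hT,
    rowLen_transposeT hT, hpc]
  simp only [p, and_comm]

lemma rowLen_rsInsert (T : List (List ℕ)) (x i : ℕ) :
    rowLen (rsInsert T x) i = rowLen T i + if i = rsBumpRow T x then 1 else 0 := by
  induction T generalizing x i with
  | nil => cases i <;> simp [rsInsert, rsBumpRow, rowLen]
  | cons r T ih =>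
    cases hf : r.findIdx? (fun y => decide (x < y)) with
    | none =>
      simp only [rsInsert, rsBumpRow, insertRow, hf]
      cases i <;> simp
    | some j =>
      have hj := (List.findIdx?_eq_some_iff_getElem.mp hf).1
      simp only [rsInsert, rsBumpRow, insertRow, hf, List.getElem?_eq_getElem hj]
      cases i <;> simp [ih]

lemma colStrict_tail {r : List ℕ} {T : List (List ℕ)} (h : colStrict (r :: T)) : colStrict T :=
  fun i c hi hc => by simpa using h (i + 1) c (by simpa using hi) (by simpa using hc)

lemma rsBumpRow_cons_pos {r : List ℕ} {T : List (List ℕ)} {y z : ℕ} (hz : z ∈ r)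
    (hyz : y < z) :
    0 < rsBumpRow (r :: T) y := by
  cases hf : r.findIdx? (fun z => decide (y < z)) with
  | none => simpa [hyz] using List.findIdx?_eq_none_iff.mp hf z hz
  | some j =>
    have hj := (List.findIdx?_eq_some_iff_getElem.mp hf).1
    simp [rsBumpRow, insertRow, hf, List.getElem?_eq_getElem hj]

lemma rowLen_rsBumpRow_lt {T : List (List ℕ)} (hT : Antitone (rowLen T)) (hcs : colStrict T)
    (x : ℕ) {m : ℕ} (hm : m < rsBumpRow T x) : rowLen T (rsBumpRow T x) < rowLen T m := by
  induction T generalizing x m with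
  | nil => simp [rsBumpRow] at hm
  | cons r T ih =>
    cases hf : r.findIdx? (fun y => decide (x < y)) with
    | none => simp [rsBumpRow, insertRow, hf] at hm
    | some j =>
      have hj := (List.findIdx?_eq_some_iff_getElem.mp hf).1
      have hbump : rsBumpRow (r :: T) x = rsBumpRow T r[j] + 1 := by
        simp only [rsBumpRow, insertRow, hf, List.getElem?_eq_getElem hj]
      have ih' := fun m => @ih (antitone_rowLen_tail hT) (colStrict_tail hcs) r[j] m
      rw [hbump] at hm ⊢
      rw [rowLen_cons_succ]
      cases m with
      | succ m => exact ih' m (by omega)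
      | zero =>
        rcases Nat.eq_zero_or_pos (rsBumpRow T r[j]) with h0 | hpos
        · suffices rowLen T 0 ≤ j by rw [h0]; simp only [rowLen_cons_zero]; omega
          cases T with
          | nil => simp [rowLen]
          | cons r₁ T =>
            -- otherwise `r₁[j] > r[j]` by column strictness, and `r[j]` would be bumped again
            by_contra! hj₁
            have hj₁ : j < r₁.length := by simpa using hj₁
            have hcol := hcs 0 j (by simp) (by simpa using hj₁)
            simp only [List.getD_cons_zero, List.getD_cons_succ, zero_add,
              List.getD_eq_getElem _ _ hj, List.getD_eq_getElem _ _ hj₁] at hcol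
            exact h0.not_gt (rsBumpRow_cons_pos (List.getElem_mem _) hcol)
        · exact (ih' 0 hpos).trans_le (hT (Nat.zero_le 1))

lemma antitone_rowLen_rsInsert {T : List (List ℕ)} (hT : Antitone (rowLen T)) (hcs : colStrict T)
    (x : ℕ) : Antitone (rowLen (rsInsert T x)) :=
  (funext (rowLen_rsInsert T x)).symm ▸
    antitone_add_ite_of_lt hT fun _ => rowLen_rsBumpRow_lt hT hcs x

theorem transpose_cBS_general (T : List (List ℕ)) (a b : ℕ)
    (hT : PartiallyStandard T) :
    transposeT (cBS T a b) = cBSalt (transposeT T) a b := by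
  obtain ⟨hne, hch, -, hcs, -, -⟩ := hT
  have hT := antitone_rowLen_of_isChain hch
  by_cases hab : a = b
  · have h := transposeT_addAtCol hT T.length a
    rw [rowLen_of_length_le le_rfl] at h
    simpa only [cBS, cBSalt, if_pos hab] using h
  · have h := transposeT_addAtCol (antitone_rowLen_rsInsert hT hcs a) (rsBumpRow T a) b
    rw [rowLen_rsInsert, if_pos rfl] at h
    simp only [cBS, cBSalt, if_neg hab, colInsertT, colBumpRow, transposeT_transposeT hne hT]
    exact h

/-- transpose intertwines the two variants of column Beissinger
insertion: `(T ←cBS (a,b))^⊤ = T^⊤ ⇐cBS (a,b)`. -/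
theorem transpose_cBS (T : List (List ℕ)) (a b : ℕ)
    (hT : PartiallyStandard T) (hab : a ≤ b) :
    transposeT (cBS T a b) = cBSalt (transposeT T) a b :=
  transpose_cBS_general T a b hT

end GelfandRSK
end

section
/- The maps ι_asc and ι_des from involutions in S_n to fixed-point-free involutions in S_{2n} preserve weak descents, weak ascents, strict descents, and strict ascents: for every involution z in S_n, Des^=(ι_asc(z)) = Des^=(ι_des(z)), Asc^=(ι_asc(z)) = Asc^=(ι_des(z)), Des^<(ι_asc(z)) = Des^<(ι_des(z)), and Asc^<(ι_asc(z)) = Asc^<(ι_des(z)). -/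
namespace GelfandRSK

/-- `i < n` is a transfer point of `f` when `n ≤ f i`. The four descent and ascent sets see
only which points are transfer points and the values at the others. -/
def TransferEquiv (f g : ℕ → ℕ) (n : ℕ) : Prop :=
  ∀ i < n, (f i = g i ∧ f i < n) ∨ (n ≤ f i ∧ n ≤ g i)

section TransferEquiv

variable {f g : ℕ → ℕ} {n : ℕ}

theorem TransferEquiv.wDesEq_eq (h : TransferEquiv f g n) : wDesEq f n = wDesEq g n := by
  ext i
  simp only [wDesEq, Finset.mem_filter, Finset.mem_range]
  by_cases hi : i < n - 1
  · have := h i (by omega); have := h (i + 1) (by omega); omega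
  · omega

theorem TransferEquiv.wAscEq_eq (h : TransferEquiv f g n) : wAscEq f n = wAscEq g n := by
  ext i
  simp only [wAscEq, Finset.mem_filter, Finset.mem_range]
  by_cases hi : i < n - 1
  · have := h i (by omega); have := h (i + 1) (by omega); omega
  · omega

theorem TransferEquiv.wDesLt_eq (h : TransferEquiv f g n) : wDesLt f n = wDesLt g n := by
  ext i
  simp only [wDesLt, wAscEq, wDesEq, Finset.mem_sdiff, Finset.mem_union, Finset.mem_filter,
    Finset.mem_range]
  by_cases hi : i < n - 1
  · have := h i (by omega); have := h (i + 1) (by omega); omega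
  · omega

theorem TransferEquiv.wAscLt_eq (h : TransferEquiv f g n) : wAscLt f n = wAscLt g n := by
  ext i
  simp only [wAscLt, wAscEq, Finset.mem_sdiff, Finset.mem_filter, Finset.mem_range]
  by_cases hi : i < n - 1
  · have := h i (by omega); have := h (i + 1) (by omega); omega
  · omega

end TransferEquiv

theorem idxOf_lt_length_fixList {n : ℕ} {z : Equiv.Perm (Fin n)} {i : Fin n} (hi : z i = i) :
    (fixList z).idxOf (i : ℕ) < (fixList z).length :=
  List.idxOf_lt_length_iff.2 <|
    List.mem_map.2 ⟨i, List.mem_filter.2 ⟨List.mem_finRange i, decide_eq_true hi⟩, rfl⟩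

/-- Both embeddings send the `k` fixed points of `z` into `[n, n + k)` and agree with `z`
elsewhere on `[0, n)`. -/
theorem transferEquiv_iotaAsc_iotaDes {n : ℕ} (z : Equiv.Perm (Fin n)) :
    TransferEquiv (iotaAsc z) (iotaDes z) n := by
  intro i hi
  simp only [iotaAsc, iotaDes, dif_pos hi]
  by_cases hfix : z ⟨i, hi⟩ = ⟨i, hi⟩
  · have : (fixList z).idxOf i < (fixList z).length := idxOf_lt_length_fixList hfix
    simp only [if_pos hfix]
    omega
  · rw [if_neg hfix, if_neg hfix]
    exact .inl ⟨rfl, (z ⟨i, hi⟩).is_lt⟩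

theorem iota_descent_sets_general (n : ℕ) (z : Equiv.Perm (Fin n)) :
    wDesEq (iotaAsc z) n = wDesEq (iotaDes z) n ∧
    wAscEq (iotaAsc z) n = wAscEq (iotaDes z) n ∧
    wDesLt (iotaAsc z) n = wDesLt (iotaDes z) n ∧
    wAscLt (iotaAsc z) n = wAscLt (iotaDes z) n :=
  have h := transferEquiv_iotaAsc_iotaDes z
  ⟨h.wDesEq_eq, h.wAscEq_eq, h.wDesLt_eq, h.wAscLt_eq⟩

/-- the embeddings `ι_asc` and `ι_des` have the same weak/strict
descent and ascent sets. -/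
theorem iota_descent_sets (n : ℕ) (z : Equiv.Perm (Fin n)) (hz : z * z = 1) :
    wDesEq (iotaAsc z) n = wDesEq (iotaDes z) n ∧
    wAscEq (iotaAsc z) n = wAscEq (iotaDes z) n ∧
    wDesLt (iotaAsc z) n = wDesLt (iotaDes z) n ∧
    wAscLt (iotaAsc z) n = wAscLt (iotaDes z) n :=
  iota_descent_sets_general n z

end GelfandRSK
end
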